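/- arXiv:2602.00689 — 3 statements merged into one kernel-verified Lean document; each statement's English description precedes it below -/
import Mathlib

section
/- Let X be a finite set with simplex Δ(X), and fix b ∈ [0, log|X|]. Define S = {p ∈ Δ(X) : H(p) ≥ b} and ∂S = {p ∈ Δ(X) : H(p) = b}. If b > 0, then S equals the convex hull of ∂S; in particular every distribution with entropy at least b is a finite convex combination of distributions with entropy exactly b. -/
open Finset Real

private lemma entropy_aux_key {X : Type*} [Fintype X] (b : ℝ) (hb0 : 0 < b) :
    ∀ n : ℕ, ∀ p : X → ℝ, (Finset.univ.filter fun z => p z ≠ 0).card ≤ n →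
      (∀ z, 0 ≤ p z) → (∑ z, p z = 1) → b ≤ -∑ z, p z * Real.log (p z) →
      p ∈ convexHull ℝ {q : X → ℝ | (∀ z, 0 ≤ q z) ∧ (∑ z, q z = 1) ∧
        (-∑ z, q z * Real.log (q z)) = b} := by
  classical
  intro n
  induction n with
  | zero =>
    intro p hcard hpos hsum _
    exfalso
    have h0 : ∀ z, p z = 0 := by
      intro z
      by_contra h
      have : 0 < (Finset.univ.filter fun z => p z ≠ 0).card :=
        Finset.card_pos.mpr ⟨z, Finset.mem_filter.mpr ⟨Finset.mem_univ z, h⟩⟩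
      omega
    rw [Finset.sum_congr rfl (fun z _ => h0 z)] at hsum
    simp at hsum
  | succ n ih =>
    intro p hcard hpos hsum hH
    set Sb : Set (X → ℝ) := {q : X → ℝ | (∀ z, 0 ≤ q z) ∧ (∑ z, q z = 1) ∧
        (-∑ z, q z * Real.log (q z)) = b} with hSb
    rcases eq_or_lt_of_le hH with heq | hlt
    · exact subset_convexHull ℝ _ ⟨hpos, hsum, heq.symm⟩
    -- support has at least two elements
    have h2 : 1 < (Finset.univ.filter fun z => p z ≠ 0).card := by
      by_contra hle
      push_neg at hle
      rw [Finset.card_le_one] at hle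
      obtain ⟨x₀, hx₀⟩ : ∃ x₀, p x₀ ≠ 0 := by
        by_contra hall; push_neg at hall
        rw [Finset.sum_congr rfl (fun z _ => hall z)] at hsum; simp at hsum
      have hz0 : ∀ z, z ≠ x₀ → p z = 0 := by
        intro z hz
        by_contra hpz
        exact hz (hle z (by simp [hpz]) x₀ (by simp [hx₀]))
      have hpx₀ : p x₀ = 1 := by
        rw [← hsum, Finset.sum_eq_single x₀ (fun z _ hz => hz0 z hz) (by simp)]
      have : (∑ z, p z * Real.log (p z)) = 0 := by
        rw [Finset.sum_eq_single x₀ (fun z _ hz => by rw [hz0 z hz]; ring) (by simp),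
          hpx₀, Real.log_one]; ring
      rw [this] at hlt
      simp at hlt; linarith
    obtain ⟨x, hx, y, hy, hxy⟩ := Finset.one_lt_card.mp h2
    simp only [Finset.mem_filter, Finset.mem_univ, true_and] at hx hy
    have hpx : 0 < p x := (hpos x).lt_of_ne (Ne.symm hx)
    have hpy : 0 < p y := (hpos y).lt_of_ne (Ne.symm hy)
    set c : X → ℝ := fun z => (if z = x then (1:ℝ) else 0) - (if z = y then 1 else 0) with hc
    set g : ℝ → X → ℝ := fun t z => p z + t * c z with hg
    have hgx : ∀ t, g t x = p x + t := by intro t; simp [hg, hc, hxy]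
    have hgy : ∀ t, g t y = p y - t := by
      intro t; simp [hg, hc, Ne.symm hxy]; ring
    have hgz : ∀ t z, z ≠ x → z ≠ y → g t z = p z := by
      intro t z h1 h2; simp [hg, hc, h1, h2]
    have hgsum : ∀ t, ∑ z, g t z = 1 := by
      intro t
      simp only [hg, hc, Finset.sum_add_distrib, hsum, mul_sub, mul_ite, mul_one, mul_zero,
        Finset.sum_sub_distrib, Finset.sum_ite_eq', Finset.mem_univ, if_true]
      ring
    set f : ℝ → ℝ := fun t => -∑ z, g t z * Real.log (g t z) with hf
    have hfc : Continuous f := by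
      refine (continuous_finset_sum _ fun z _ => ?_).neg
      exact Real.continuous_mul_log.comp (by continuity)
    have hf0 : f 0 = -∑ z, p z * Real.log (p z) := by simp [hf, hg]
    -- the key side claim
    have claim : ∀ T : ℝ, T ≠ 0 → (∀ s ∈ Set.uIcc 0 T, ∀ z, 0 ≤ g s z) →
        (Finset.univ.filter fun z => g T z ≠ 0).card ≤ n →
        ∃ t, t ∈ Set.uIcc 0 T ∧ t ≠ 0 ∧ g t ∈ convexHull ℝ Sb := by
      intro T hT hpos' hcard'
      by_cases hb : b ≤ f T
      · exact ⟨T, Set.right_mem_uIcc, hT, ih (g T) hcard' (hpos' T Set.right_mem_uIcc)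
          (hgsum T) hb⟩
      · push_neg at hb
        have : b ∈ Set.uIcc (f 0) (f T) := by
          rw [Set.mem_uIcc]; right
          exact ⟨hb.le, by rw [hf0]; exact hlt.le⟩
        obtain ⟨t, ht, hft⟩ := intermediate_value_uIcc hfc.continuousOn this
        refine ⟨t, ht, ?_, subset_convexHull ℝ _ ⟨hpos' t ht, hgsum t, hft⟩⟩
        intro h0
        rw [h0, hf0] at hft
        exact absurd hft.symm hlt.ne
    -- positive side: T = p y
    have hposP : ∀ s ∈ Set.uIcc 0 (p y), ∀ z, 0 ≤ g s z := by
      intro s hs z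
      rw [Set.uIcc_of_le hpy.le] at hs
      obtain ⟨hs0, hs1⟩ := hs
      by_cases h1 : z = x
      · subst h1; rw [hgx]; linarith
      by_cases h2 : z = y
      · subst h2; rw [hgy]; linarith
      · rw [hgz _ _ h1 h2]; exact hpos z
    have hcardP : (Finset.univ.filter fun z => g (p y) z ≠ 0).card ≤ n := by
      have hsub : (Finset.univ.filter fun z => g (p y) z ≠ 0) ⊆
          (Finset.univ.filter fun z => p z ≠ 0).erase y := by
        intro z hz
        simp only [Finset.mem_filter, Finset.mem_univ, true_and] at hz
        rcases eq_or_ne z y with rfl | hzy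
        · exact absurd (by rw [hgy]; ring) hz
        refine Finset.mem_erase.mpr ⟨hzy, Finset.mem_filter.mpr ⟨Finset.mem_univ z, ?_⟩⟩
        rcases eq_or_ne z x with rfl | hzx
        · exact hx
        · rw [hgz _ _ hzx hzy] at hz; exact hz
      calc (Finset.univ.filter fun z => g (p y) z ≠ 0).card
          ≤ ((Finset.univ.filter fun z => p z ≠ 0).erase y).card := Finset.card_le_card hsub
        _ ≤ (Finset.univ.filter fun z => p z ≠ 0).card - 1 := by
            rw [Finset.card_erase_of_mem (by simp [hy])]
        _ ≤ n := by omega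
    -- negative side: T = -p x
    have hposN : ∀ s ∈ Set.uIcc 0 (-p x), ∀ z, 0 ≤ g s z := by
      intro s hs z
      rw [Set.uIcc_of_ge (by linarith)] at hs
      obtain ⟨hs0, hs1⟩ := hs
      by_cases h1 : z = x
      · subst h1; rw [hgx]; linarith
      by_cases h2 : z = y
      · subst h2; rw [hgy]; linarith
      · rw [hgz _ _ h1 h2]; exact hpos z
    have hcardN : (Finset.univ.filter fun z => g (-p x) z ≠ 0).card ≤ n := by
      have hsub : (Finset.univ.filter fun z => g (-p x) z ≠ 0) ⊆
          (Finset.univ.filter fun z => p z ≠ 0).erase x := by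
        intro z hz
        simp only [Finset.mem_filter, Finset.mem_univ, true_and] at hz
        rcases eq_or_ne z x with rfl | hzx
        · exact absurd (by rw [hgx]; ring) hz
        refine Finset.mem_erase.mpr ⟨hzx, Finset.mem_filter.mpr ⟨Finset.mem_univ z, ?_⟩⟩
        rcases eq_or_ne z y with rfl | hzy
        · exact hy
        · rw [hgz _ _ hzx hzy] at hz; exact hz
      calc (Finset.univ.filter fun z => g (-p x) z ≠ 0).card
          ≤ ((Finset.univ.filter fun z => p z ≠ 0).erase x).card := Finset.card_le_card hsub
        _ ≤ (Finset.univ.filter fun z => p z ≠ 0).card - 1 := by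
            rw [Finset.card_erase_of_mem (by simp [hx])]
        _ ≤ n := by omega
    obtain ⟨tP, htPmem, htP0, htPconv⟩ := claim (p y) hpy.ne' hposP hcardP
    obtain ⟨tN, htNmem, htN0, htNconv⟩ := claim (-p x) (by linarith) hposN hcardN
    rw [Set.uIcc_of_le hpy.le] at htPmem
    rw [Set.uIcc_of_ge (by linarith)] at htNmem
    have htPpos : 0 < tP := htPmem.1.lt_of_ne (Ne.symm htP0)
    have htNneg : tN < 0 := htNmem.2.lt_of_ne htN0
    -- p is on the segment between g tN and g tP
    have hseg : p ∈ segment ℝ (g tN) (g tP) := by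
      have hd : tP - tN > 0 := by linarith
      refine ⟨tP / (tP - tN), -tN / (tP - tN), by apply div_nonneg <;> linarith, by apply div_nonneg <;> linarith, ?_, ?_⟩
      · field_simp; ring
      · funext z
        simp only [Pi.add_apply, Pi.smul_apply, smul_eq_mul, hg]
        field_simp
        ring
    exact (convex_convexHull ℝ Sb).segment_subset htNconv htPconv hseg

/-- For `0 < b ≤ log |X|`, the super-level set
`S = {p ∈ Δ(X) : H(p) ≥ b}` is the convex hull of the level set
`∂S = {p ∈ Δ(X) : H(p) = b}`. -/
theorem entropy_superlevel_eq_convexHull_boundary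
    {X : Type*} [Fintype X] [Nonempty X] (b : ℝ)
    (H : (X → ℝ) → ℝ)
    (hH : ∀ p : X → ℝ, H p = -∑ x, p x * Real.log (p x))
    (hb0 : 0 < b) (hb1 : b ≤ Real.log (Fintype.card X)) :
    {p : X → ℝ | (∀ x, 0 ≤ p x) ∧ (∑ x, p x = 1) ∧ b ≤ H p} =
      convexHull ℝ
        {p : X → ℝ | (∀ x, 0 ≤ p x) ∧ (∑ x, p x = 1) ∧ H p = b} := by
  simp only [hH]
  apply le_antisymm
  · intro p hp
    exact entropy_aux_key b hb0 _ p le_rfl hp.1 hp.2.1 hp.2.2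
  · -- the superlevel set is convex
    have hconc : ConcaveOn ℝ (stdSimplex ℝ X) (fun p : X → ℝ =>
        -∑ x, p x * Real.log (p x)) := by
      have hone : ∀ x : X, ConvexOn ℝ (stdSimplex ℝ X)
          (fun p : X → ℝ => p x * Real.log (p x)) := fun x =>
        (Real.convexOn_mul_log.comp_affineMap
          ((LinearMap.proj x : (X → ℝ) →ₗ[ℝ] ℝ).toAffineMap)).subset
          (fun p hp => hp.1 x) (convex_stdSimplex ℝ X)
      have hsum : ∀ s : Finset X, ConvexOn ℝ (stdSimplex ℝ X)
          (fun p : X → ℝ => ∑ x ∈ s, p x * Real.log (p x)) := by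
        intro s
        induction s using Finset.cons_induction with
        | empty => simpa using convexOn_const (0:ℝ) (convex_stdSimplex ℝ X)
        | cons a s ha ih =>
          simp only [Finset.sum_cons]
          exact (hone _).add ih
      exact (hsum Finset.univ).neg
    have hSconv : Convex ℝ {p : X → ℝ | (∀ x, 0 ≤ p x) ∧ (∑ x, p x = 1) ∧
        b ≤ -∑ x, p x * Real.log (p x)} := by
      have := hconc.convex_ge b
      convert this using 1
      ext p
      simp only [Set.mem_setOf_eq, Set.mem_sep_iff, stdSimplex, and_assoc]
    apply convexHull_min _ hSconv
    rintro p ⟨h1, h2, h3⟩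
    exact ⟨h1, h2, h3.ge⟩
end

section
/- Let S = {p ∈ Δ(X) : H(p) ≥ b} with 0 < b ≤ log|X|. Every extreme point of the convex set S has entropy exactly b. -/
open Finset Real

/-- For `0 < b ≤ log |X|`, every extreme point of
`S = {p ∈ Δ(X) : H(p) ≥ b}` has entropy exactly `b`. -/
theorem extremePoints_entropy_superlevel
    {X : Type*} [Fintype X] [Nonempty X] (b : ℝ)
    (H : (X → ℝ) → ℝ)
    (hH : ∀ p : X → ℝ, H p = -∑ x, p x * Real.log (p x))
    (hb0 : 0 < b) (hb1 : b ≤ Real.log (Fintype.card X))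
    (S : Set (X → ℝ))
    (hS : S = {p : X → ℝ | (∀ x, 0 ≤ p x) ∧ (∑ x, p x = 1) ∧ b ≤ H p}) :
    ∀ p ∈ S.extremePoints ℝ, H p = b := by
  intro p hp
  rw [mem_extremePoints] at hp
  obtain ⟨hpS, hext⟩ := hp
  have hpS' := hpS
  rw [hS] at hpS'
  obtain ⟨hnn, hsum, hHb⟩ := hpS'
  classical
  by_contra hne
  have hgt : b < H p := lt_of_le_of_ne hHb (Ne.symm hne)
  -- p has two distinct strictly positive coordinates
  have hpos : ∃ i j : X, i ≠ j ∧ 0 < p i ∧ 0 < p j := by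
    by_contra hcon
    push_neg at hcon
    obtain ⟨i, hi⟩ : ∃ i, 0 < p i := by
      by_contra h
      push_neg at h
      have : ∑ x, p x = 0 := Finset.sum_eq_zero fun x _ => le_antisymm (h x) (hnn x)
      rw [hsum] at this; norm_num at this
    have hzero' : ∀ j, j ≠ i → p j = 0 := by
      intro j hj
      by_contra h
      have hj' : 0 < p j := lt_of_le_of_ne (hnn j) (Ne.symm h)
      have := hcon i j (fun e => hj e.symm) hi
      linarith
    have hpi : p i = 1 := by
      rw [← hsum, Finset.sum_eq_single i (fun j _ hj => hzero' j hj) (by simp)]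
    have hH0 : H p = 0 := by
      rw [hH]
      have : ∀ x ∈ Finset.univ, p x * Real.log (p x) = 0 := by
        intro x _
        by_cases hx : x = i
        · rw [hx, hpi]; simp
        · rw [hzero' x hx]; simp
      rw [Finset.sum_eq_zero this]; simp
    linarith
  obtain ⟨i, j, hij, hpi, hpj⟩ := hpos
  -- perturbation direction
  set d : X → ℝ := fun x => if x = i then 1 else if x = j then -1 else 0 with hd
  have hdsum : ∑ x, d x = 0 := by
    have heq : ∀ x, d x = (if x = i then (1:ℝ) else 0) + (if x = j then (-1:ℝ) else 0) := by
      intro x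
      by_cases hx : x = i
      · subst hx; simp [hd, Ne.symm hij, hij]
      · by_cases hx' : x = j
        · subst hx'; simp [hd, hx]
        · simp [hd, hx, hx']
    simp only [heq]
    rw [Finset.sum_add_distrib, Finset.sum_ite_eq' Finset.univ i (fun _ => (1:ℝ)),
      Finset.sum_ite_eq' Finset.univ j (fun _ => (-1:ℝ))]
    simp
  -- continuity of entropy along the line
  have hcont : Continuous fun ε : ℝ => H (p + ε • d) := by
    simp only [hH]
    apply Continuous.neg
    apply continuous_finset_sum
    intro x _
    have : (fun ε : ℝ => (p + ε • d) x * Real.log ((p + ε • d) x)) =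
        (fun t : ℝ => t * Real.log t) ∘ (fun ε : ℝ => p x + ε * d x) := by
      ext ε; simp [Pi.add_apply, Pi.smul_apply, smul_eq_mul]
    rw [this]
    exact Real.continuous_mul_log.comp (continuous_const.add (continuous_id.mul continuous_const))
  have h0 : b < (fun ε : ℝ => H (p + ε • d)) 0 := by simpa using hgt
  have hev : ∀ᶠ ε in nhds (0:ℝ), b < H (p + ε • d) :=
    (hcont.continuousAt (x := 0)).eventually_const_lt h0
  obtain ⟨δ, hδ0, hδ⟩ := Metric.eventually_nhds_iff.mp hev
  set ε : ℝ := min (δ/2) (min (p i / 2) (p j / 2)) with hε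
  have hε0 : 0 < ε := by positivity
  have hεδ : ε < δ := lt_of_le_of_lt (min_le_left _ _) (by linarith)
  have hεi : ε ≤ p i / 2 := le_trans (min_le_right _ _) (min_le_left _ _)
  have hεj : ε ≤ p j / 2 := le_trans (min_le_right _ _) (min_le_right _ _)
  -- both perturbed points lie in S
  have hmem : ∀ t : ℝ, |t| ≤ ε → (p + t • d) ∈ S := by
    intro t ht
    rw [hS]
    refine ⟨?_, ?_, ?_⟩
    · intro x
      have h1 : -ε ≤ t := neg_le_of_abs_le ht
      have h2 : t ≤ ε := le_of_abs_le ht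
      simp only [Pi.add_apply, Pi.smul_apply, smul_eq_mul]
      by_cases hx : x = i
      · subst hx; simp only [hd, if_pos rfl]; nlinarith
      · by_cases hx' : x = j
        · subst hx'; simp only [hd, if_neg hx, if_pos rfl, if_true]; nlinarith
        · simp only [hd, if_neg hx, if_neg hx']
          have := hnn x; linarith
    · simp only [Pi.add_apply, Pi.smul_apply, smul_eq_mul]
      rw [Finset.sum_add_distrib, hsum, ← Finset.mul_sum, hdsum]
      ring
    · have : dist t (0:ℝ) < δ := by
        rw [Real.dist_eq, sub_zero]
        exact lt_of_le_of_lt ht hεδ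
      exact le_of_lt (hδ this)
  have hq1 : (p + ε • d) ∈ S := hmem ε (by rw [abs_of_pos hε0])
  have hq2 : (p + (-ε) • d) ∈ S := hmem (-ε) (by rw [abs_neg, abs_of_pos hε0])
  have hseg : p ∈ openSegment ℝ (p + ε • d) (p + (-ε) • d) := by
    refine ⟨1/2, 1/2, by norm_num, by norm_num, by norm_num, ?_⟩
    module
  have := (hext _ hq1 _ hq2 hseg).1
  have hcontra : p i + ε = p i := by
    conv_rhs => rw [← this]
    simp [hd]
  linarith
end

section
/- The partial derivative of the mutual information I(X_i;Y) with respect to a channel entry q(y|x), with the joint input distribution p(x) held fixed, equals p(x) log(p(y|x_i)/p(y)), where x = (x_i, x_{-i}). -/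
/-!
Write `N(xᵢ, y) = p(y|xᵢ)` and `D(y) = ∑ p(xᵢ) N(xᵢ, y) = p(y)`, so that
`I(Xᵢ;Y) = ∑ p(xᵢ) N log (N / D)`. Perturbing one channel entry moves each `N` affinely, and
differentiating `N log (N / D)` gives `N' log (N / D) + N' - N D' / D`. Summed against `p(xᵢ)`
the last two terms give `D' - D D' / D = 0` for each `y`: only the direct term
`p(a, m) log (N(a, y₀) / D(y₀))` survives.
-/

open Finset Real

theorem hasDerivAt_mul_log_div {f g : ℝ → ℝ} {f' g' x : ℝ} (hf : HasDerivAt f f' x)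
    (hg : HasDerivAt g g' x) (hfx : f x ≠ 0) (hgx : g x ≠ 0) :
    HasDerivAt (fun t => f t * log (f t / g t))
      (f' * log (f x / g x) + f' - f x * g' / g x) x := by
  refine (hf.fun_mul ((hf.fun_div hg hgx).log (div_ne_zero hfx hgx))).congr_deriv ?_
  field_simp
  ring

theorem hasDerivAt_sum_mul_log_div_sum {ι κ : Type*} [Fintype ι] [Fintype κ] (p : ι → ℝ)
    {N : ι → κ → ℝ → ℝ} {N' : ι → κ → ℝ} {x : ℝ}
    (hN : ∀ i k, HasDerivAt (N i k) (N' i k) x)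
    (hN0 : ∀ i k, N i k x ≠ 0) (hD0 : ∀ k, ∑ j, p j * N j k x ≠ 0) :
    HasDerivAt (fun t => ∑ i, ∑ k, p i * (N i k t * log (N i k t / ∑ j, p j * N j k t)))
      (∑ i, ∑ k, p i * (N' i k * log (N i k x / ∑ j, p j * N j k x))) x := by
  have hD (k : κ) : HasDerivAt (fun t => ∑ j, p j * N j k t) (∑ j, p j * N' j k) x :=
    HasDerivAt.fun_sum fun j _ => (hN j k).const_mul (p j)
  refine (HasDerivAt.fun_sum (u := univ) fun i _ => HasDerivAt.fun_sum (u := univ) fun k _ =>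
    (hasDerivAt_mul_log_div (hN i k) (hD k) (hN0 i k) (hD0 k)).const_mul (p i)).congr_deriv ?_
  refine sum_comm.trans ((sum_congr rfl fun k _ => ?_).trans sum_comm)
  set D := ∑ j, p j * N j k x
  set D' := ∑ j, p j * N' j k
  have hindirect : ∑ i, p i * (N' i k - N i k x * D' / D) = 0 := by
    have hD'D : ∑ i, p i * (N i k x * D' / D) = D * (D' / D) := by
      rw [sum_mul]
      exact sum_congr rfl fun i _ => by ring
    simp only [mul_sub, sum_sub_distrib]
    rw [hD'D, mul_div_cancel₀ _ (hD0 k)]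
    exact sub_self _
  rw [← sub_eq_zero, ← sum_sub_distrib, ← hindirect]
  exact sum_congr rfl fun i _ => by ring

section Channel

variable {Xi Xmi Y : Type*}

def condOutput [Fintype Xmi] (pc : Xi → Xmi → ℝ) (Q : Xi → Xmi → Y → ℝ) (xi : Xi) (y : Y) : ℝ :=
  ∑ xmi, pc xi xmi * Q xi xmi y

theorem condOutput_pos [Fintype Xmi] [Nonempty Xmi] {pc : Xi → Xmi → ℝ}
    {Q : Xi → Xmi → Y → ℝ} (hpc : ∀ xi xmi, 0 < pc xi xmi) (hQ : ∀ xi xmi y, 0 < Q xi xmi y)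
    (xi : Xi) (y : Y) : 0 < condOutput pc Q xi y :=
  sum_pos (fun xmi _ => mul_pos (hpc xi xmi) (hQ xi xmi y)) univ_nonempty

theorem sum_mul_condOutput [Fintype Xi] [Fintype Xmi] (pi : Xi → ℝ) (pc : Xi → Xmi → ℝ)
    (Q : Xi → Xmi → Y → ℝ) (y : Y) :
    ∑ xi, pi xi * condOutput pc Q xi y = ∑ xi, ∑ xmi, pi xi * pc xi xmi * Q xi xmi y := by
  simp only [condOutput, mul_sum, mul_assoc]

theorem sum_mul_log_div_eq_sum_condOutput [Fintype Xi] [Fintype Xmi] [Fintype Y]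
    (pi : Xi → ℝ) (pc : Xi → Xmi → ℝ) (Q : Xi → Xmi → Y → ℝ) :
    ∑ xi, ∑ xmi, ∑ y, pi xi * pc xi xmi * Q xi xmi y *
        log ((∑ xmi', pc xi xmi' * Q xi xmi' y) /
          (∑ xi', ∑ xmi', pi xi' * pc xi' xmi' * Q xi' xmi' y)) =
      ∑ xi, ∑ y, pi xi * (condOutput pc Q xi y *
        log (condOutput pc Q xi y / ∑ j, pi j * condOutput pc Q j y)) := by
  refine sum_congr rfl fun xi _ => sum_comm.trans (sum_congr rfl fun y _ => ?_)
  simp only [condOutput, mul_sum, sum_mul, mul_assoc]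

theorem condOutput_add_entry [Fintype Xmi] [DecidableEq Xi] [DecidableEq Xmi] [DecidableEq Y]
    (pc : Xi → Xmi → ℝ) (Q : Xi → Xmi → Y → ℝ) (a : Xi) (m : Xmi) (y₀ : Y) (t : ℝ)
    (xi : Xi) (y : Y) :
    condOutput pc (fun xi xmi y =>
        if xi = a ∧ xmi = m ∧ y = y₀ then Q xi xmi y + t else Q xi xmi y) xi y =
      condOutput pc Q xi y + t * if xi = a ∧ y = y₀ then pc a m else 0 := by
  have hentry (xmi : Xmi) :
      pc xi xmi * (if xi = a ∧ xmi = m ∧ y = y₀ then Q xi xmi y + t else Q xi xmi y) =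
        pc xi xmi * Q xi xmi y +
          t * if xmi = m then (if xi = a ∧ y = y₀ then pc a m else 0) else 0 := by
    by_cases h : xi = a ∧ xmi = m ∧ y = y₀
    · obtain ⟨rfl, rfl, rfl⟩ := h
      simp only [and_self, if_true]
      ring
    · grind
  simp only [condOutput, hentry, sum_add_distrib, ← mul_sum, sum_ite_eq', mem_univ, if_true]

theorem hasDerivAt_condOutput_add_entry [Fintype Xmi] [DecidableEq Xi] [DecidableEq Xmi]
    [DecidableEq Y] (pc : Xi → Xmi → ℝ) (Q : Xi → Xmi → Y → ℝ) (a : Xi) (m : Xmi) (y₀ : Y)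
    (x : ℝ) (xi : Xi) (y : Y) :
    HasDerivAt (fun t => condOutput pc (fun xi xmi y =>
        if xi = a ∧ xmi = m ∧ y = y₀ then Q xi xmi y + t else Q xi xmi y) xi y)
      (if xi = a ∧ y = y₀ then pc a m else 0) x := by
  simp only [condOutput_add_entry]
  exact (((hasDerivAt_id x).mul_const _).const_add _).congr_deriv (one_mul _)

end Channel

/-- The partial derivative of `I(X_i;Y)` with respect to the
channel entry `q(y₀|a,m)` (input distribution fixed, entries treated as free
variables) equals `p(a,m) * log (p(y₀|a) / p(y₀))`. -/
theorem mutual_info_deriv_in_channel_entry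
    {Xi Xmi Y : Type*} [Fintype Xi] [Fintype Xmi] [Fintype Y]
    [DecidableEq Xi] [DecidableEq Xmi] [DecidableEq Y]
    (pi : Xi → ℝ) (pc : Xi → Xmi → ℝ) (Q : Xi → Xmi → Y → ℝ)
    (hpi : ∀ xi, 0 < pi xi) (hpc : ∀ xi xmi, 0 < pc xi xmi)
    (hQ : ∀ xi xmi y, 0 < Q xi xmi y)
    -- mutual information as a function of the channel matrix
    (MI : (Xi → Xmi → Y → ℝ) → ℝ)
    (hMI : ∀ Q' : Xi → Xmi → Y → ℝ, MI Q' =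
      ∑ xi, ∑ xmi, ∑ y, pi xi * pc xi xmi * Q' xi xmi y *
        Real.log ((∑ xmi', pc xi xmi' * Q' xi xmi' y) /
          (∑ xi', ∑ xmi', pi xi' * pc xi' xmi' * Q' xi' xmi' y)))
    (a : Xi) (m : Xmi) (y₀ : Y) :
    HasDerivAt
      (fun t : ℝ => MI (fun xi xmi y =>
        if xi = a ∧ xmi = m ∧ y = y₀ then Q xi xmi y + t else Q xi xmi y))
      (pi a * pc a m *
        Real.log ((∑ xmi', pc a xmi' * Q a xmi' y₀) /
          (∑ xi', ∑ xmi', pi xi' * pc xi' xmi' * Q xi' xmi' y₀)))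
      0 := by
  have : Nonempty Xi := ⟨a⟩
  have : Nonempty Xmi := ⟨m⟩
  have hN := condOutput_pos hpc hQ
  have hD (y : Y) : 0 < ∑ j, pi j * condOutput pc Q j y :=
    sum_pos (fun j _ => mul_pos (hpi j) (hN j y)) univ_nonempty
  have key := hasDerivAt_sum_mul_log_div_sum pi (hasDerivAt_condOutput_add_entry pc Q a m y₀ 0)
    (by simpa using fun xi y => (hN xi y).ne') (by simpa using fun y => (hD y).ne')
  simp only [hMI, sum_mul_log_div_eq_sum_condOutput]
  refine key.congr_deriv ?_
  rw [Fintype.sum_eq_single a fun xi h => by simp [h],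
    Fintype.sum_eq_single y₀ fun y h => by simp [h]]
  simp only [and_self, if_true, add_zero, ite_self, sum_mul_condOutput, mul_assoc]
  rfl
end
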